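/- arXiv:1304.5447 — 7 statements merged into one kernel-verified Lean document; each statement's English description precedes it below -/
import Mathlib

section
/- Let M be an Artinian monomial ideal with staircase S and outer corners α^1 >_σ ... >_σ α^N ordered by the lexicographic order induced by a permutation σ of {1,...,n}. Define inductively S_{σ,α^k} = { x ∈ S \ (S_{σ,α^1} ∪ ... ∪ S_{σ,α^{k-1}}) : x ≤ α^k }. Then the sets S_{σ,α^1},...,S_{σ,α^N} form a partition of S. -/
open MvPolynomial MeasureTheory

def lcmOf {n r : ℕ} (a : Fin r → Fin n → ℕ) (I : Finset (Fin r)) : Fin n → ℕ :=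
  fun j => I.sup fun i => a i j

def Scarf {n r : ℕ} (a : Fin r → Fin n → ℕ) : Set (Finset (Fin r)) :=
  {I | ∀ J : Finset (Fin r), lcmOf a J = lcmOf a I → J = I}

def StrictlyDivides {n : ℕ} (b c : Fin n → ℕ) : Prop :=
  ∀ ℓ, b ℓ ≤ c ℓ ∧ (0 < c ℓ → b ℓ < c ℓ)

def Generic {n : ℕ} {ι : Type*} (a : ι → Fin n → ℕ) : Prop :=
  ∀ i j, i ≠ j → (∃ ℓ, 0 < a i ℓ ∧ a i ℓ = a j ℓ) →
    ∃ k, StrictlyDivides (a k) (a i ⊔ a j)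

def ArtinianGens {n : ℕ} {ι : Type*} (a : ι → Fin n → ℕ) : Prop :=
  ∀ ℓ : Fin n, ∃ i, ∀ m, m ≠ ℓ → a i m = 0

def MinimalGens {n : ℕ} {ι : Type*} (a : ι → Fin n → ℕ) : Prop :=
  ∀ i j, a i ≤ a j → i = j

def genStaircase {n r : ℕ} (a : Fin r → Fin n → ℕ) : Set (Fin n → ℝ) :=
  {x | (∀ j, 0 < x j) ∧ ∀ i, ∃ j, x j ≤ (a i j : ℝ)}

def outerCorners {n : ℕ} (S : Set (Fin n → ℝ)) : Set (Fin n → ℝ) :=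
  {α | α ∈ S ∧ ∀ x ∈ S, α ≤ x → x = α}

def lexGT {n : ℕ} (σ : Equiv.Perm (Fin n)) (α β : Fin n → ℝ) : Prop :=
  ∃ k, (∀ ℓ < k, α (σ ℓ) = β (σ ℓ)) ∧ β (σ k) < α (σ k)

def piece {n : ℕ} (S : Set (Fin n → ℝ)) (σ : Equiv.Perm (Fin n)) (α : Fin n → ℝ) :
    Set (Fin n → ℝ) :=
  {x | x ∈ S ∧ x ≤ α ∧ ∀ β ∈ outerCorners S, lexGT σ β α → ¬ x ≤ β}

noncomputable def monIdeal {n : ℕ} (B : Set (Fin n → ℕ)) : Ideal (MvPolynomial (Fin n) ℂ) :=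
  Ideal.span ((fun b => monomial (Finsupp.equivFunOnFinite.symm b) (1:ℂ)) '' B)

def IsMonomialIdeal {n : ℕ} (M : Ideal (MvPolynomial (Fin n) ℂ)) : Prop :=
  ∃ B, M = monIdeal B

def staircaseI {n : ℕ} (M : Ideal (MvPolynomial (Fin n) ℂ)) : Set (Fin n → ℝ) :=
  {x | (∀ i, 0 < x i) ∧
    monomial (Finsupp.equivFunOnFinite.symm fun i => ⌈x i⌉₊ - 1) (1:ℂ) ∉ M}

/-!
Each point `x` of the staircase lies in the unit cube whose far corner is `⌈x⌉`; the exponent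
`⌈x⌉ - 1` is a standard monomial of `M`. Standard monomials are linearly independent modulo a
monomial ideal, so for an Artinian `M` there are finitely many of them, and the exponent of `x`
lies below a maximal one `e`. The corner `e + 1` of its cube is then an outer corner above `x`.
Hence every point lies below some `α k`, and it belongs to the piece of the least such `k`.
-/

section GreedyPartition

variable {ι X : Type*} [LinearOrder ι] {S : Set X} {U T : ι → Set X}

theorem pairwise_disjoint_of_greedy
    (hT : ∀ k, T k = {x | x ∈ S ∧ (∀ j < k, x ∉ T j) ∧ x ∈ U k}) :
    Pairwise fun j k => Disjoint (T j) (T k) := by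
  have hfresh : ∀ {j k}, j < k → Disjoint (T j) (T k) := fun {j k} hjk =>
    Set.disjoint_right.mpr fun x hx => by rw [hT k] at hx; exact hx.2.1 j hjk
  intro j k hjk
  rcases hjk.lt_or_gt with h | h
  · exact hfresh h
  · exact (hfresh h).symm

theorem iUnion_eq_of_greedy [WellFoundedLT ι]
    (hT : ∀ k, T k = {x | x ∈ S ∧ (∀ j < k, x ∉ T j) ∧ x ∈ U k})
    (hcover : S ⊆ ⋃ k, U k) :
    ⋃ k, T k = S := by
  refine subset_antisymm (Set.iUnion_subset fun k x hx => by rw [hT k] at hx; exact hx.1) ?_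
  intro x hx
  obtain ⟨k, hk, hmin⟩ := WellFounded.has_min wellFounded_lt {k | x ∈ U k}
    (Set.mem_iUnion.mp (hcover hx))
  refine Set.mem_iUnion.mpr ⟨k, ?_⟩
  rw [hT k]
  refine ⟨hx, fun j hjk hxj => hmin j ?_ hjk, hk⟩
  rw [hT j] at hxj
  exact hxj.2.2

end GreedyPartition

namespace MvPolynomial

variable {σ K : Type*} [Field K] {s : Set (σ →₀ ℕ)}

theorem monomial_mem_ideal_span_monomial_image {d : σ →₀ ℕ} :
    monomial d (1 : K) ∈ Ideal.span ((fun s => monomial s (1 : K)) '' s) ↔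
      ∃ si ∈ s, si ≤ d := by
  classical
  rw [mem_ideal_span_monomial_image, support_monomial, if_neg one_ne_zero]
  simp

theorem linearIndependent_mk_monomial_notMem :
    LinearIndependent K
      fun d : {d | monomial d (1 : K) ∉ Ideal.span ((fun s => monomial s (1 : K)) '' s)} =>
        Ideal.Quotient.mk (Ideal.span ((fun s => monomial s (1 : K)) '' s))
          (monomial (d : σ →₀ ℕ) 1) := by
  set I := Ideal.span ((fun s => monomial s (1 : K)) '' s)
  set std := {d | monomial d (1 : K) ∉ I}
  have hmon : LinearIndependent K fun d : std => monomial (d : σ →₀ ℕ) (1 : K) := by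
    have := (basisMonomials σ K).linearIndependent.comp ((↑) : std → σ →₀ ℕ)
      Subtype.val_injective
    rwa [coe_basisMonomials] at this
  refine hmon.map (f := (Ideal.Quotient.mkₐ K I).toLinearMap) ?_
  rw [Submodule.disjoint_def]
  intro p hp hpI
  have hsupp : ↑p.support ⊆ std := by
    have hrange : Set.range (fun d : std => monomial (d : σ →₀ ℕ) (1 : K)) =
        (monomial · 1) '' std :=
      (Set.image_eq_range (monomial · 1) std).symm
    rwa [hrange, ← restrictSupport_eq_span] at hp
  have hpI : p ∈ I := Ideal.Quotient.eq_zero_iff_mem.mp (by simpa using hpI)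
  rw [mem_ideal_span_monomial_image] at hpI
  refine support_eq_empty.mp (Finset.eq_empty_of_forall_notMem fun d hd => hsupp hd ?_)
  exact monomial_mem_ideal_span_monomial_image.mpr (hpI d hd)

end MvPolynomial

section Staircase

variable {n : ℕ}

def standardExponents (M : Ideal (MvPolynomial (Fin n) ℂ)) : Set (Fin n → ℕ) :=
  {d | monomial (Finsupp.equivFunOnFinite.symm d) (1 : ℂ) ∉ M}

variable {M : Ideal (MvPolynomial (Fin n) ℂ)}

theorem IsMonomialIdeal.finite_standardExponents (hmon : IsMonomialIdeal M)
    [FiniteDimensional ℂ (MvPolynomial (Fin n) ℂ ⧸ M)] : (standardExponents M).Finite := by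
  obtain ⟨B, rfl⟩ := hmon
  rw [monIdeal, ← Set.image_image (fun s => monomial s (1 : ℂ)) Finsupp.equivFunOnFinite.symm]
    at *
  have hfin := (linearIndependent_mk_monomial_notMem (K := ℂ)
    (s := Finsupp.equivFunOnFinite.symm '' B)).finite
  exact (Set.finite_coe_iff.mp hfin).preimage Finsupp.equivFunOnFinite.symm.injective.injOn

/-- A point `x > 0` lies in the unit cube `∏ i, (d i, d i + 1]` with `d = ceilExp x`, whose top
corner is `cubeCorner d`; `staircaseI M` is the union of these cubes over the standard `d`. -/
noncomputable def ceilExp (x : Fin n → ℝ) : Fin n → ℕ := fun i => ⌈x i⌉₊ - 1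

def cubeCorner (d : Fin n → ℕ) : Fin n → ℝ := fun i => d i + 1

theorem ceilExp_cubeCorner (d : Fin n → ℕ) : ceilExp (cubeCorner d) = d := by
  funext i
  have hcast : (d i : ℝ) + 1 = ((d i + 1 : ℕ) : ℝ) := by push_cast; rfl
  simp only [ceilExp, cubeCorner, hcast, Nat.ceil_natCast, Nat.add_sub_cancel]

theorem cubeCorner_pos (d : Fin n → ℕ) (i : Fin n) : 0 < cubeCorner d i := by
  simp only [cubeCorner]
  positivity

theorem le_cubeCorner_iff {x : Fin n → ℝ} {d : Fin n → ℕ} (hx : ∀ i, 0 < x i) :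
    x ≤ cubeCorner d ↔ ceilExp x ≤ d := by
  refine forall_congr' fun i => ?_
  have hceil_pos : 0 < ⌈x i⌉₊ := Nat.ceil_pos.mpr (hx i)
  have hcast : (d i : ℝ) + 1 = ((d i + 1 : ℕ) : ℝ) := by push_cast; rfl
  simp only [ceilExp, cubeCorner, hcast, ← Nat.ceil_le]
  omega

theorem le_ceilExp_of_cubeCorner_le {x : Fin n → ℝ} {d : Fin n → ℕ}
    (h : cubeCorner d ≤ x) : d ≤ ceilExp x := fun i => by
  have hlt : d i < ⌈x i⌉₊ :=
    Nat.lt_ceil.mpr (by have := h i; simp only [cubeCorner] at this; linarith)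
  simp only [ceilExp]
  omega

theorem cubeCorner_mem_outerCorners {d : Fin n → ℕ}
    (hd : Maximal (· ∈ standardExponents M) d) :
    cubeCorner d ∈ outerCorners (staircaseI M) := by
  refine ⟨⟨cubeCorner_pos d, ?_⟩, fun z hz hdz => ?_⟩
  · change ceilExp (cubeCorner d) ∈ standardExponents M
    rw [ceilExp_cubeCorner]
    exact hd.prop
  · have hz_le : ceilExp z ≤ d := hd.le_of_ge hz.2 (le_ceilExp_of_cubeCorner_le hdz)
    exact le_antisymm ((le_cubeCorner_iff hz.1).mpr hz_le) hdz

theorem exists_mem_outerCorners_ge (hfin : (standardExponents M).Finite) {x : Fin n → ℝ}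
    (hx : x ∈ staircaseI M) : ∃ β ∈ outerCorners (staircaseI M), x ≤ β := by
  obtain ⟨d, hxd, hd⟩ := hfin.exists_le_maximal (a := ceilExp x) hx.2
  exact ⟨cubeCorner d, cubeCorner_mem_outerCorners hd, (le_cubeCorner_iff hx.1).mpr hxd⟩

end Staircase

theorem stmt5_general {n N : ℕ} (M : Ideal (MvPolynomial (Fin n) ℂ))
    (hmon : IsMonomialIdeal M)
    (hart : FiniteDimensional ℂ (MvPolynomial (Fin n) ℂ ⧸ M))
    (α : Fin N → (Fin n → ℝ))
    (henum : ∀ β, β ∈ outerCorners (staircaseI M) ↔ ∃ k, α k = β)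
    (T : Fin N → Set (Fin n → ℝ))
    (hT : ∀ k, T k =
      {x | x ∈ staircaseI M ∧ (∀ j < k, x ∉ T j) ∧ x ≤ α k}) :
    (∀ j k : Fin N, j ≠ k → Disjoint (T j) (T k)) ∧
      (⋃ k, T k) = staircaseI M := by
  have hcover : staircaseI M ⊆ ⋃ k, Set.Iic (α k) := fun x hx => by
    obtain ⟨β, hβ, hxβ⟩ := exists_mem_outerCorners_ge hmon.finite_standardExponents hx
    obtain ⟨k, rfl⟩ := (henum β).mp hβ
    exact Set.mem_iUnion.mpr ⟨k, hxβ⟩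
  exact ⟨pairwise_disjoint_of_greedy (U := fun k => Set.Iic (α k)) hT,
    iUnion_eq_of_greedy (U := fun k => Set.Iic (α k)) hT hcover⟩

/-- ordering the outer corners `α^1 >_σ … >_σ α^N` of the staircase
of an Artinian monomial ideal by the σ-lexicographic order, the inductively
defined sets `S_{σ,α^k} = {x ∈ S \ (S_{σ,α^1} ∪ … ∪ S_{σ,α^{k-1}}) : x ≤ α^k}`
form a partition of `S`. -/
theorem stmt5 {n N : ℕ} (M : Ideal (MvPolynomial (Fin n) ℂ))
    (hmon : IsMonomialIdeal M)
    (hart : FiniteDimensional ℂ (MvPolynomial (Fin n) ℂ ⧸ M))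
    (σ : Equiv.Perm (Fin n)) (α : Fin N → (Fin n → ℝ))
    (henum : ∀ β, β ∈ outerCorners (staircaseI M) ↔ ∃ k, α k = β)
    (hord : ∀ j k : Fin N, j < k → lexGT σ (α j) (α k))
    (T : Fin N → Set (Fin n → ℝ))
    (hT : ∀ k, T k =
      {x | x ∈ staircaseI M ∧ (∀ j < k, x ∉ T j) ∧ x ≤ α k}) :
    (∀ j k : Fin N, j ≠ k → Disjoint (T j) (T k)) ∧
      (⋃ k, T k) = staircaseI M :=
  stmt5_general M hmon hart α henum T hT
end

section
/- Let M be a generic Artinian monomial ideal with Scarf complex Δ. If I = {i_1,...,i_n} is a top-dimensional face of Δ with label z^α, then for each ℓ ∈ {1,...,n} there is a unique vertex i of I whose exponent a^i satisfies a^i_ℓ = α_ℓ. In other words, there is a permutation η of {1,...,n} with α_ℓ = a^{i_{η(ℓ)}}_ℓ for all ℓ. -/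
open MvPolynomial MeasureTheory

/-- in the Scarf complex of a generic Artinian monomial ideal, each
top-dimensional face `I` (label `z^α`) has, for every `ℓ`, a unique vertex `i`
with `a^i_ℓ = α_ℓ`; equivalently, the vertices can be enumerated
`v : Fin n → Fin r` with `a^{v(ℓ)}_ℓ = α_ℓ` for all `ℓ`. -/
theorem stmt6 {n r : ℕ} (a : Fin r → Fin n → ℕ)
    (hgen : Generic a) (hart : ArtinianGens a) (hminimal : MinimalGens a)
    (I : Finset (Fin r)) (hI : I ∈ Scarf a) (hcard : I.card = n) :
    (∀ ℓ : Fin n, ∃! i : Fin r, i ∈ I ∧ a i ℓ = lcmOf a I ℓ) ∧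
      ∃ v : Fin n → Fin r, Function.Injective v ∧ (∀ ℓ, v ℓ ∈ I) ∧
        ∀ ℓ, a (v ℓ) ℓ = lcmOf a I ℓ := by
  classical
  have key : ∀ i : {x // x ∈ I}, ∃ c : Fin n, a i.1 c = lcmOf a I c ∧
      ∀ j ∈ I, a j c = lcmOf a I c → j = i.1 := by
    rintro ⟨i, hi⟩
    have hne : I.erase i ≠ I := by
      intro h
      exact Finset.notMem_erase i I (by rw [h]; exact hi)
    have hl : lcmOf a (I.erase i) ≠ lcmOf a I := fun h => hne (hI _ h)
    have hex : ∃ c, lcmOf a (I.erase i) c ≠ lcmOf a I c := by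
      by_contra h; push_neg at h; exact hl (funext h)
    obtain ⟨c, hc⟩ := hex
    have hle : lcmOf a (I.erase i) c ≤ lcmOf a I c := by
      exact Finset.sup_mono (Finset.erase_subset _ _)
    have hlt : lcmOf a (I.erase i) c < lcmOf a I c := lt_of_le_of_ne hle hc
    have hsup : lcmOf a I c = a i c ⊔ lcmOf a (I.erase i) c := by
      unfold lcmOf
      conv_lhs => rw [← Finset.insert_erase hi]
      rw [Finset.sup_insert]
    have hai : a i c = lcmOf a I c := by
      rcases max_cases (a i c) (lcmOf a (I.erase i) c) with ⟨h1, _⟩ | ⟨h1, _⟩ <;> omega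
    refine ⟨c, hai, fun j hj hjc => ?_⟩
    by_contra hji
    have hjmem : j ∈ I.erase i := Finset.mem_erase.mpr ⟨hji, hj⟩
    have : a j c ≤ lcmOf a (I.erase i) c := Finset.le_sup (f := fun t => a t c) hjmem
    omega
  choose g hg1 hg2 using key
  have ginj : Function.Injective g := by
    rintro i j hij
    have := hg2 j i.1 i.2 (hij ▸ hg1 i)
    exact Subtype.ext this
  have hcards : Fintype.card {x // x ∈ I} = Fintype.card (Fin n) := by
    simp [Fintype.card_coe, hcard]
  have gbij : Function.Bijective g :=
    (Fintype.bijective_iff_injective_and_card g).mpr ⟨ginj, hcards⟩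
  set e := Equiv.ofBijective g gbij with he
  constructor
  · intro ℓ
    refine ⟨(e.symm ℓ).1, ⟨(e.symm ℓ).2, ?_⟩, ?_⟩
    · have : g (e.symm ℓ) = ℓ := e.apply_symm_apply ℓ
      simpa [this] using hg1 (e.symm ℓ)
    · intro y hy
      have hgl : g (e.symm ℓ) = ℓ := e.apply_symm_apply ℓ
      exact hg2 (e.symm ℓ) y hy.1 (by simpa [hgl] using hy.2)
  · refine ⟨fun ℓ => (e.symm ℓ).1, ?_, fun ℓ => (e.symm ℓ).2, fun ℓ => ?_⟩
    · intro ℓ₁ ℓ₂ h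
      exact e.symm.injective (Subtype.ext h)
    · have hgl : g (e.symm ℓ) = ℓ := e.apply_symm_apply ℓ
      simpa [hgl] using hg1 (e.symm ℓ)
end

section
/- Let M be a generic Artinian monomial ideal in C[z_1,...,z_n] with staircase S, and let a be an inner corner of S (a minimal monomial generator exponent). Then every maximal element of R_a := { x ∈ S : x_1 = a_1, x_ℓ > a_ℓ for ℓ = 2,...,n } is a maximal element of S, namely an outer corner α of S with α_1 = a_1 whose corresponding top-dimensional Scarf simplex has a as its x_1-vertex. -/
open MvPolynomial MeasureTheory

/-- `R_a = {x ∈ S : x_1 = a_1, x_ℓ > a_ℓ for ℓ ≥ 2}` for an inner corner `a c`. -/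
def Rcorner {m r : ℕ} (a : Fin r → Fin (m+1) → ℕ) (c : Fin r) : Set (Fin (m+1) → ℝ) :=
  {x | x ∈ genStaircase a ∧ x 0 = (a c 0 : ℝ) ∧
    ∀ ℓ : Fin (m+1), ℓ ≠ 0 → (a c ℓ : ℝ) < x ℓ}

/-- every maximal element of `R_a` is a maximal element (outer
corner) of the staircase `S`, namely an outer corner `α` with `α_1 = a_1` whose
Scarf simplex has `a` as its `x_1`-vertex. -/
theorem stmt7 {m r : ℕ} (a : Fin r → Fin (m+1) → ℕ)
    (hgen : Generic a) (hart : ArtinianGens a) (hminimal : MinimalGens a)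
    (c : Fin r) :
    ∀ β ∈ Rcorner a c, (∀ y ∈ Rcorner a c, β ≤ y → y = β) →
      β ∈ outerCorners (genStaircase a) ∧
        ∃ I ∈ Scarf a, I.card = m + 1 ∧ c ∈ I ∧ lcmOf a I 0 = a c 0 ∧
          ∀ j, β j = (lcmOf a I j : ℝ) := by

  intro β hβ hmax
  obtain ⟨hβS, hβ0, hβgt⟩ := hβ
  obtain ⟨hpos, hstair⟩ := hβS
  obtain ⟨i0, -⟩ := hart 0
  have hne : (Finset.univ : Finset (Fin r)).Nonempty := ⟨i0, Finset.mem_univ _⟩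
  -- Claim 1: β is an outer corner of the staircase.
  have houter : β ∈ outerCorners (genStaircase a) := by
    refine ⟨⟨hpos, hstair⟩, ?_⟩
    intro y hy hle
    by_cases h0 : y 0 = (a c 0 : ℝ)
    · exact hmax y ⟨hy, h0, fun ℓ hℓ => lt_of_lt_of_le (hβgt ℓ hℓ) (hle ℓ)⟩ hle
    · exfalso
      have h0' : (a c 0 : ℝ) < y 0 := lt_of_le_of_ne (hβ0 ▸ hle 0) (Ne.symm h0)
      obtain ⟨j, hj⟩ := hy.2 c
      rcases eq_or_ne j 0 with rfl | hj0
      · exact absurd hj (not_le.mpr h0')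
      · exact absurd hj (not_le.mpr (lt_of_lt_of_le (hβgt j hj0) (hle j)))
  -- For each coordinate j there is a generator equal to β at j and below β elsewhere.
  have hexists : ∀ j : Fin (m+1), ∃ i, (∀ k, k ≠ j → (a i k : ℝ) < β k) ∧ (a i j : ℝ) = β j := by
    intro j
    by_contra hcon
    push_neg at hcon
    -- every generator below β away from j strictly exceeds β at j
    have hcon' : ∀ i, (∀ k, k ≠ j → (a i k : ℝ) < β k) → β j < (a i j : ℝ) := by
      intro i hi
      obtain ⟨k, hk⟩ := hstair i
      rcases eq_or_ne k j with rfl | hkj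
      · exact lt_of_le_of_ne hk (fun h => hcon i hi h.symm)
      · exact absurd hk (not_le.mpr (hi k hkj))
    set f : Fin r → ℝ := fun i => if β j < (a i j : ℝ) then (a i j : ℝ) - β j else 1 with hf
    set t : ℝ := Finset.univ.inf' hne f with ht
    have htpos : 0 < t := by
      rw [ht, Finset.lt_inf'_iff]
      intro i _
      simp only [hf]
      split
      · linarith [show β j < (a i j : ℝ) from by assumption]
      · norm_num
    set y : Fin (m+1) → ℝ := Function.update β j (β j + t) with hy
    have hley : β ≤ y := by
      intro k
      rcases eq_or_ne k j with rfl | hkj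
      · simp [hy, Function.update_self]; linarith
      · simp [hy, Function.update_of_ne hkj]
    have hyS : y ∈ genStaircase a := by
      constructor
      · intro k
        rcases eq_or_ne k j with rfl | hkj
        · simp only [hy, Function.update_self]; linarith [hpos k]
        · simp only [hy, Function.update_of_ne hkj]; exact hpos k
      · intro i
        by_cases hi : ∀ k, k ≠ j → (a i k : ℝ) < β k
        · refine ⟨j, ?_⟩
          have h1 : β j < (a i j : ℝ) := hcon' i hi
          have h2 : t ≤ f i := Finset.inf'_le f (Finset.mem_univ i)
          simp only [hf, if_pos h1] at h2
          simp only [hy, Function.update_self]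
          linarith
        · push_neg at hi
          obtain ⟨k, hkj, hk⟩ := hi
          exact ⟨k, by simp only [hy, Function.update_of_ne hkj]; exact hk⟩
    have := houter.2 y hyS hley
    have hj : y j = β j := by rw [this]
    simp only [hy, Function.update_self] at hj
    linarith
  choose pick hpick1 hpick2 using hexists
  -- a key uniqueness lemma from genericity
  have uniq : ∀ i i' (ℓ : Fin (m+1)), (∀ k, (a i k : ℝ) ≤ β k) → (∀ k, (a i' k : ℝ) ≤ β k) →
      (a i ℓ : ℝ) = β ℓ → (a i' ℓ : ℝ) = β ℓ → i = i' := by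
    intro i i' ℓ hi hi' he he'
    by_contra hii
    have hposℓ : 0 < a i ℓ := by
      have h := hpos ℓ
      rw [← he] at h
      exact_mod_cast h
    have heq : a i ℓ = a i' ℓ := by
      have : (a i ℓ : ℝ) = (a i' ℓ : ℝ) := he.trans he'.symm
      exact_mod_cast this
    obtain ⟨k, hk⟩ := hgen i i' hii ⟨ℓ, hposℓ, heq⟩
    obtain ⟨ℓ', hℓ'⟩ := hstair k
    obtain ⟨h1, h2⟩ := hk ℓ'
    have hsupv : (a i ⊔ a i') ℓ' = max (a i ℓ') (a i' ℓ') := rfl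
    rcases Nat.eq_zero_or_pos ((a i ⊔ a i') ℓ') with hz | hz
    · have hk0 : a k ℓ' = 0 := Nat.le_zero.mp (hz ▸ h1)
      rw [hk0] at hℓ'
      exact absurd hℓ' (not_le.mpr (by exact_mod_cast hpos ℓ'))
    · have hlt : a k ℓ' < (a i ⊔ a i') ℓ' := h2 hz
      have hsup : ((a i ⊔ a i') ℓ' : ℝ) ≤ β ℓ' := by
        rw [hsupv]
        push_cast
        exact max_le (hi ℓ') (hi' ℓ')
      have : (a k ℓ' : ℝ) < β ℓ' := lt_of_lt_of_le (by exact_mod_cast hlt) hsup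
      exact absurd hℓ' (not_le.mpr this)
  have hale : ∀ j k, (a (pick j) k : ℝ) ≤ β k := by
    intro j k
    rcases eq_or_ne k j with rfl | hkj
    · exact le_of_eq (hpick2 k)
    · exact le_of_lt (hpick1 j k hkj)
  refine ⟨houter, ?_⟩
  set I : Finset (Fin r) := Finset.image pick Finset.univ with hI
  have hinj : Function.Injective pick := by
    intro j j' h
    by_contra hjj
    have h1 : (a (pick j') j' : ℝ) = β j' := hpick2 j'
    have h2 : (a (pick j) j' : ℝ) < β j' := hpick1 j j' (Ne.symm hjj)
    rw [h] at h2
    exact absurd h1 (ne_of_lt h2)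
  -- lcm of I equals β
  have hlcmI : ∀ j, (lcmOf a I j : ℝ) = β j := by
    intro j
    have hval : lcmOf a I j = a (pick j) j := by
      unfold lcmOf
      rw [hI, Finset.sup_image]
      apply le_antisymm
      · apply Finset.sup_le
        intro k _
        have : (a (pick k) j : ℝ) ≤ (a (pick j) j : ℝ) := by
          rw [hpick2 j]
          exact hale k j
        exact_mod_cast this
      · exact Finset.le_sup (f := fun k => a (pick k) j) (Finset.mem_univ j)
    rw [hval]
    exact hpick2 j
  have hacle : ∀ k, (a c k : ℝ) ≤ β k := by
    intro k
    rcases eq_or_ne k 0 with rfl | hk0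
    · exact le_of_eq hβ0.symm
    · exact le_of_lt (hβgt k hk0)
  have hc0 : c = pick 0 := uniq c (pick 0) 0 hacle (hale 0) hβ0.symm (hpick2 0)
  have hmemI : ∀ i, i ∈ I ↔ ∃ j, pick j = i := by
    intro i
    simp [hI]
  refine ⟨I, ?_, ?_, ?_, ?_, fun j => (hlcmI j).symm⟩
  · -- Scarf
    intro J hJ
    have hJle : ∀ j, (lcmOf a J j : ℝ) = β j := by
      intro j
      rw [hJ]
      exact hlcmI j
    have hJne : J.Nonempty := by
      by_contra hJe
      rw [Finset.not_nonempty_iff_eq_empty] at hJe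
      have : lcmOf a J 0 = 0 := by simp [lcmOf, hJe]
      have h0 := hJle 0
      rw [this] at h0
      exact absurd h0.symm (ne_of_gt (by exact_mod_cast hpos 0))
    have hmemle : ∀ i ∈ J, ∀ k, (a i k : ℝ) ≤ β k := by
      intro i hi k
      have : a i k ≤ lcmOf a J k := Finset.le_sup (f := fun i => a i k) hi
      calc (a i k : ℝ) ≤ (lcmOf a J k : ℝ) := by exact_mod_cast this
        _ = β k := hJle k
    apply Finset.Subset.antisymm
    · intro i hi
      obtain ⟨ℓ, hℓ⟩ := hstair i
      have heq : (a i ℓ : ℝ) = β ℓ := le_antisymm (hmemle i hi ℓ) hℓ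
      have : i = pick ℓ := uniq i (pick ℓ) ℓ (hmemle i hi) (hale ℓ) heq (hpick2 ℓ)
      rw [this, hmemI]
      exact ⟨ℓ, rfl⟩
    · intro i hi
      rw [hmemI] at hi
      obtain ⟨j, rfl⟩ := hi
      obtain ⟨i', hi'J, hi'⟩ := Finset.exists_mem_eq_sup J hJne (fun i => a i j)
      have heq : (a i' j : ℝ) = β j := by
        rw [← hJle j]
        exact_mod_cast congrArg Nat.cast hi'.symm
      have : i' = pick j := uniq i' (pick j) j (hmemle i' hi'J) (hale j) heq (hpick2 j)
      rwa [← this]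
  · rw [hI, Finset.card_image_of_injective _ hinj, Finset.card_univ, Fintype.card_fin]
  · rw [hmemI]; exact ⟨0, hc0.symm⟩
  · have h := hlcmI 0
    rw [hβ0] at h
    exact_mod_cast h
end

section
/- Let M be a generic Artinian monomial ideal with staircase S, and let a ≠ b be two inner corners of S. Let π : R^n → R^{n-1} be the projection forgetting the first coordinate, and for an inner corner c set R_c = { x ∈ S : x_1 = c_1, x_ℓ > c_ℓ for ℓ = 2,...,n }. Then π(R_a) ∩ π(R_b) = ∅. -/
open MvPolynomial MeasureTheory

/-- for distinct inner corners `a ≠ b` of the staircase of a generic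
Artinian monomial ideal, the projections forgetting the first coordinate satisfy
`π(R_a) ∩ π(R_b) = ∅`. -/
theorem stmt10 {m r : ℕ} (a : Fin r → Fin (m+1) → ℕ)
    (hgen : Generic a) (hart : ArtinianGens a) (hminimal : MinimalGens a)
    (c d : Fin r) (hcd : c ≠ d) :
    ((fun x : Fin (m+1) → ℝ => x ∘ Fin.succ) '' Rcorner a c) ∩
        ((fun x : Fin (m+1) → ℝ => x ∘ Fin.succ) '' Rcorner a d) = ∅ := by
  ext p
  simp only [Set.mem_inter_iff, Set.mem_image, Set.mem_empty_iff_false, iff_false]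
  rintro ⟨⟨x, ⟨⟨hxpos, hxstair⟩, hx0, hxgt⟩, hxp⟩, ⟨y, ⟨⟨hypos, hystair⟩, hy0, hygt⟩, hyp⟩⟩
  have hxy : ∀ ℓ : Fin (m+1), ℓ ≠ 0 → x ℓ = y ℓ := by
    intro ℓ hℓ
    obtain ⟨k, rfl⟩ := Fin.exists_succ_eq.mpr hℓ
    exact congrFun (hxp.trans hyp.symm) k
  have hcd0 : a c 0 = a d 0 := by
    obtain ⟨j, hj⟩ := hystair c
    have h1 : a d 0 ≤ a c 0 := by
      by_cases hj0 : j = 0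
      · subst hj0; rw [hy0] at hj; exact_mod_cast hj
      · exact absurd hj (not_le.mpr ((hxy j hj0) ▸ hxgt j hj0))
    obtain ⟨j', hj'⟩ := hxstair d
    have h2 : a c 0 ≤ a d 0 := by
      by_cases hj0 : j' = 0
      · subst hj0; rw [hx0] at hj'; exact_mod_cast hj'
      · exact absurd hj' (not_le.mpr ((hxy j' hj0) ▸ hygt j' hj0))
    omega
  have hpos : 0 < a c 0 := by
    have := hxpos 0; rw [hx0] at this; exact_mod_cast this
  obtain ⟨k, hk⟩ := hgen c d hcd ⟨0, hpos, hcd0⟩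
  obtain ⟨j, hj⟩ := hxstair k
  by_cases hj0 : j = 0
  · subst hj0
    have hsup : (a c ⊔ a d) 0 = a c 0 := by
      simp [Pi.sup_apply, hcd0]
    have hlt : a k 0 < a c 0 := by
      have := (hk 0).2 (by rw [hsup]; exact hpos)
      rwa [hsup] at this
    rw [hx0] at hj
    have : (a c 0 : ℝ) ≤ a k 0 := hj
    exact absurd (by exact_mod_cast this) (not_le.mpr hlt)
  · have h1 : (a c j : ℝ) < x j := hxgt j hj0
    have h2 : (a d j : ℝ) < x j := (hxy j hj0) ▸ hygt j hj0
    have h3 : a k j ≤ max (a c j) (a d j) := by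
      have := (hk j).1
      simpa [Pi.sup_apply] using this
    have h4 : (a k j : ℝ) < x j := by
      rcases max_cases (a c j) (a d j) with ⟨he, _⟩ | ⟨he, _⟩ <;> rw [he] at h3
      · exact lt_of_le_of_lt (by exact_mod_cast h3 : (a k j : ℝ) ≤ a c j) h1
      · exact lt_of_le_of_lt (by exact_mod_cast h3 : (a k j : ℝ) ≤ a d j) h2
    exact absurd hj (not_le.mpr h4)
end

section
/- Let M be a generic Artinian monomial ideal with staircase S and let π : R^n → R^{n-1} forget the first coordinate. Then for every x ∈ S there exists an inner corner a of S with π(x) ∈ π(R_a), where R_a = { y ∈ S : y_1 = a_1, y_ℓ > a_ℓ for ℓ ≥ 2 }. Consequently the nonempty sets P_a = { x ∈ S : π(x) ∈ π(R_a) } partition S. -/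
open MvPolynomial MeasureTheory

/-- `P_a = {x ∈ S : π(x) ∈ π(R_a)}`, where `π` forgets the first coordinate. -/
def Pcorner {m r : ℕ} (a : Fin r → Fin (m+1) → ℕ) (c : Fin r) : Set (Fin (m+1) → ℝ) :=
  {x | x ∈ genStaircase a ∧
    (x ∘ Fin.succ) ∈ (fun y : Fin (m+1) → ℝ => y ∘ Fin.succ) '' (Rcorner a c)}

/-- every point of the staircase `S` projects into `π(R_a)` for
some inner corner `a`; consequently the nonempty sets `P_a` partition `S`. -/
theorem stmt11 {m r : ℕ} (a : Fin r → Fin (m+1) → ℕ)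
    (hgen : Generic a) (hart : ArtinianGens a) (hminimal : MinimalGens a) :
    (∀ x ∈ genStaircase a, ∃ c : Fin r,
        (x ∘ Fin.succ) ∈ (fun y : Fin (m+1) → ℝ => y ∘ Fin.succ) '' (Rcorner a c)) ∧
      (∀ c d : Fin r, c ≠ d → Disjoint (Pcorner a c) (Pcorner a d)) ∧
      (⋃ c : Fin r, Pcorner a c) = genStaircase a := by
  have key : ∀ x ∈ genStaircase a, ∃ c : Fin r,
      (x ∘ Fin.succ) ∈ (fun y : Fin (m+1) → ℝ => y ∘ Fin.succ) '' (Rcorner a c) := by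
    intro x hx
    obtain ⟨hxpos, hxS⟩ := hx
    set C : Finset (Fin r) :=
      Finset.univ.filter (fun c => ∀ ℓ : Fin (m+1), ℓ ≠ 0 → (a c ℓ : ℝ) < x ℓ) with hC
    have hCne : C.Nonempty := by
      obtain ⟨i, hi⟩ := hart 0
      refine ⟨i, ?_⟩
      simp only [hC, Finset.mem_filter, Finset.mem_univ, true_and]
      intro ℓ hℓ
      rw [hi ℓ hℓ]
      simpa using hxpos ℓ
    obtain ⟨c, hcC, hcmin⟩ := C.exists_min_image (fun c => a c 0) hCne
    have hcand : ∀ ℓ : Fin (m+1), ℓ ≠ 0 → (a c ℓ : ℝ) < x ℓ := by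
      have := hcC; simp only [hC, Finset.mem_filter, Finset.mem_univ, true_and] at this
      exact this
    have hc0pos : 0 < a c 0 := by
      by_contra h
      push_neg at h
      obtain ⟨j, hj⟩ := hxS c
      rcases eq_or_ne j 0 with rfl | hj0
      · have hx0 := hxpos 0
        have : a c 0 = 0 := Nat.le_zero.mp h
        rw [this] at hj
        simp at hj
        linarith
      · exact absurd hj (not_le.mpr (hcand j hj0))
    set y : Fin (m+1) → ℝ := Fin.cons ((a c 0 : ℝ)) (x ∘ Fin.succ) with hy
    have hy0 : y 0 = (a c 0 : ℝ) := rfl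
    have hysucc : ∀ k : Fin m, y k.succ = x k.succ := fun k => rfl
    have hyne : ∀ ℓ : Fin (m+1), ℓ ≠ 0 → y ℓ = x ℓ := by
      intro ℓ hℓ
      obtain ⟨k, rfl⟩ := Fin.eq_succ_of_ne_zero hℓ
      exact hysucc k
    have hyS : y ∈ genStaircase a := by
      constructor
      · intro j
        rcases eq_or_ne j 0 with rfl | hj0
        · rw [hy0]; exact_mod_cast hc0pos
        · rw [hyne j hj0]; exact hxpos j
      · intro i
        by_cases hiC : i ∈ C
        · refine ⟨0, ?_⟩
          rw [hy0]
          exact_mod_cast hcmin i hiC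
        · simp only [hC, Finset.mem_filter, Finset.mem_univ, true_and, not_forall,
            not_lt] at hiC
          obtain ⟨ℓ, hℓ0, hℓ⟩ := hiC
          exact ⟨ℓ, by rw [hyne ℓ hℓ0]; exact hℓ⟩
    refine ⟨c, y, ⟨hyS, hy0, fun ℓ hℓ => by rw [hyne ℓ hℓ]; exact hcand ℓ hℓ⟩, ?_⟩
    funext k
    exact hysucc k
  refine ⟨key, ?_, ?_⟩
  · intro c d hcd
    rw [Set.disjoint_left]
    rintro x ⟨hxS, y, ⟨hyS, hy0, hyc⟩, hyproj⟩ ⟨-, z, ⟨hzS, hz0, hzd⟩, hzproj⟩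
    have hyz : ∀ ℓ : Fin (m+1), ℓ ≠ 0 → y ℓ = z ℓ := by
      intro ℓ hℓ
      obtain ⟨k, rfl⟩ := Fin.eq_succ_of_ne_zero hℓ
      have h1 := congrFun hyproj k
      have h2 := congrFun hzproj k
      simp only [Function.comp_apply] at h1 h2
      rw [h1, h2]
    have hc0pos : 0 < a c 0 := by
      have := hyS.1 0
      rw [hy0] at this
      exact_mod_cast this
    have hd0pos : 0 < a d 0 := by
      have := hzS.1 0
      rw [hz0] at this
      exact_mod_cast this
    rcases lt_trichotomy (a c 0) (a d 0) with hlt | heq | hgt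
    · obtain ⟨j, hj⟩ := hzS.2 c
      rcases eq_or_ne j 0 with rfl | hj0
      · rw [hz0] at hj
        have : a d 0 ≤ a c 0 := by exact_mod_cast hj
        omega
      · rw [← hyz j hj0] at hj
        exact absurd hj (not_le.mpr (hyc j hj0))
    · obtain ⟨k, hk⟩ := hgen c d hcd ⟨0, hc0pos, heq⟩
      obtain ⟨j, hj⟩ := hyS.2 k
      rcases eq_or_ne j 0 with rfl | hj0
      · have hsup : (a c ⊔ a d) 0 = a c 0 := by
          simp only [Pi.sup_apply, heq, sup_idem]
        have hk0 := (hk 0).2 (by rw [hsup]; exact hc0pos)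
        rw [hsup] at hk0
        rw [hy0] at hj
        have : a c 0 ≤ a k 0 := by exact_mod_cast hj
        omega
      · have h1 : (a c j : ℝ) < y j := hyc j hj0
        have h2 : (a d j : ℝ) < y j := by rw [hyz j hj0]; exact hzd j hj0
        have hk1 : a k j ≤ a c j ⊔ a d j := (hk j).1
        have : (a k j : ℝ) ≤ max (a c j : ℝ) (a d j : ℝ) := by
          rw [← Nat.cast_max]; exact_mod_cast hk1
        have : (a k j : ℝ) < y j := lt_of_le_of_lt this (max_lt h1 h2)
        linarith [hj]
    · obtain ⟨j, hj⟩ := hyS.2 d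
      rcases eq_or_ne j 0 with rfl | hj0
      · rw [hy0] at hj
        have : a c 0 ≤ a d 0 := by exact_mod_cast hj
        omega
      · rw [hyz j hj0] at hj
        exact absurd hj (not_le.mpr (hzd j hj0))
  · ext x
    simp only [Set.mem_iUnion]
    constructor
    · rintro ⟨c, hc, -⟩; exact hc
    · intro hx
      obtain ⟨c, hc⟩ := key x hx
      exact ⟨c, hx, hc⟩
end

section
/- Let M be a generic Artinian monomial ideal with staircase S and let α be an outer corner of S whose Scarf simplex has a as its x_1-vertex. Then for the identity permutation σ, the partition piece S_{σ,α} is contained in P_a = { x ∈ S : π(x) ∈ π(R_a) }. -/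
open MvPolynomial MeasureTheory

/-- if the Scarf simplex of an outer corner `α` has `a` as its
`x_1`-vertex, then for the identity permutation the partition piece `S_{σ,α}` is
contained in `P_a`. -/
theorem stmt12 {m r : ℕ} (a : Fin r → Fin (m+1) → ℕ)
    (hgen : Generic a) (hart : ArtinianGens a) (hminimal : MinimalGens a)
    (c : Fin r) (I : Finset (Fin r)) (hI : I ∈ Scarf a) (hcard : I.card = m + 1)
    (hcI : c ∈ I) (hvert : lcmOf a I 0 = a c 0)
    (hcorner : (fun j => (lcmOf a I j : ℝ)) ∈ outerCorners (genStaircase a)) :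
    piece (genStaircase a) (Equiv.refl (Fin (m+1))) (fun j => (lcmOf a I j : ℝ)) ⊆
      Pcorner a c := by
  classical
  intro x hx
  obtain ⟨hxS, hxle, hpiece⟩ := hx
  have hαS : (fun j => (lcmOf a I j : ℝ)) ∈ genStaircase a := hcorner.1
  have hαpos : ∀ j, 0 < lcmOf a I j := by
    intro j
    have h : (0:ℝ) < (lcmOf a I j : ℝ) := hαS.1 j
    exact_mod_cast h
  have hac_le : ∀ j, a c j ≤ lcmOf a I j := fun j =>
    Finset.le_sup (f := fun i => a i j) hcI
  have haA : ∀ i : Fin r, (∀ j, a i j < lcmOf a I j) → False := by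
    intro i h
    obtain ⟨j, hj⟩ := hαS.2 i
    have h2 : (a i j : ℝ) < (lcmOf a I j : ℝ) := by exact_mod_cast h j
    exact absurd hj (not_le.2 h2)
  have hxle' : ∀ j, x j ≤ (lcmOf a I j : ℝ) := fun j => hxle j
  have key : ∀ i : Fin r, i ≠ c → (∀ j, j ≠ 0 → (a i j : ℝ) < x j) →
      lcmOf a I 0 < a i 0 := by
    intro i hic hi
    by_contra hle
    push_neg at hle
    have hlt : ∀ j, j ≠ 0 → a i j < lcmOf a I j := fun j hj =>
      Nat.cast_lt.mp (lt_of_lt_of_le (hi j hj) (hxle' j))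
    rcases lt_or_eq_of_le hle with h0 | h0
    · refine haA i (fun j => ?_)
      rcases eq_or_ne j 0 with rfl | hj
      · exact h0
      · exact hlt j hj
    · obtain ⟨k, hk⟩ := hgen i c hic ⟨0, by
        refine ⟨?_, ?_⟩
        · rw [h0]; exact hαpos 0
        · rw [h0, hvert]⟩
      refine haA k (fun j => ?_)
      have hsup : (a i ⊔ a c) j ≤ lcmOf a I j := by
        rw [Pi.sup_apply]
        refine sup_le ?_ (hac_le j)
        rcases eq_or_ne j 0 with rfl | hj
        · exact le_of_eq h0
        · exact le_of_lt (hlt j hj)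
      obtain ⟨h1, h2⟩ := hk j
      rcases Nat.eq_zero_or_pos ((a i ⊔ a c) j) with hz | hz
      · have hk0 : a k j = 0 := Nat.le_zero.mp (hz ▸ h1)
        rw [hk0]; exact hαpos j
      · exact lt_of_lt_of_le (h2 hz) hsup
  -- Goal 1 : all coordinates ℓ ≠ 0 of x exceed a c ℓ
  have goal1 : ∀ ℓ : Fin (m+1), ℓ ≠ 0 → (a c ℓ : ℝ) < x ℓ := by
    by_contra hcon
    push_neg at hcon
    obtain ⟨ℓ₀, hℓ₀, hxℓ₀⟩ := hcon
    set B : Finset (Fin r) := Finset.univ.filter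
      (fun i => ∀ j, j ≠ 0 → (a i j : ℝ) < x j) with hB
    have hBne : B.Nonempty := by
      obtain ⟨i0, hi0⟩ := hart 0
      refine ⟨i0, Finset.mem_filter.mpr ⟨Finset.mem_univ _, fun j hj => ?_⟩⟩
      rw [hi0 j hj]
      exact_mod_cast hxS.1 j
    have hBlt : ∀ i ∈ B, lcmOf a I 0 < a i 0 := by
      intro i hi
      have hi' := (Finset.mem_filter.mp hi).2
      have hic : i ≠ c := by
        rintro rfl
        exact absurd hxℓ₀ (not_le.2 (hi' ℓ₀ hℓ₀))
      exact key i hic hi'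
    set T : ℕ := B.inf' hBne (fun i => a i 0) with hT
    have hTgt : lcmOf a I 0 < T := (Finset.lt_inf'_iff hBne).mpr hBlt
    have hTle : ∀ i ∈ B, T ≤ a i 0 := fun i hi => Finset.inf'_le _ hi
    set x' : Fin (m+1) → ℝ := Function.update x 0 (T : ℝ) with hx'
    have hxx' : x ≤ x' := by
      intro j
      rcases eq_or_ne j 0 with rfl | hj
      · rw [hx', Function.update_self]
        exact le_of_lt (lt_of_le_of_lt (hxle' 0) (Nat.cast_lt.mpr hTgt))
      · rw [hx', Function.update_of_ne hj]
    have hx'S : x' ∈ genStaircase a := by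
      refine ⟨fun j => lt_of_lt_of_le (hxS.1 j) (hxx' j), fun i => ?_⟩
      by_cases hiB : i ∈ B
      · refine ⟨0, ?_⟩
        rw [hx', Function.update_self]
        exact_mod_cast hTle i hiB
      · have hnot : ¬ ∀ j, j ≠ 0 → (a i j : ℝ) < x j := fun h =>
          hiB (Finset.mem_filter.mpr ⟨Finset.mem_univ _, h⟩)
        push_neg at hnot
        obtain ⟨j, hj, hji⟩ := hnot
        exact ⟨j, by rw [hx', Function.update_of_ne hj]; exact hji⟩
    have hbound : ∀ z ∈ genStaircase a, ∀ ℓ,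
        z ℓ ≤ (a (Classical.choose (hart ℓ)) ℓ : ℝ) := by
      intro z hz ℓ
      obtain ⟨j, hj⟩ := hz.2 (Classical.choose (hart ℓ))
      rcases eq_or_ne j ℓ with rfl | hjℓ
      · exact hj
      · exfalso
        have h0 := Classical.choose_spec (hart ℓ) j hjℓ
        rw [h0] at hj
        have : (0:ℝ) < z j := hz.1 j
        simp only [Nat.cast_zero] at hj
        linarith
    set b : Fin (m+1) → ℝ := fun ℓ => (a (Classical.choose (hart ℓ)) ℓ : ℝ) with hb
    set S' : Set (Fin (m+1) → ℝ) :=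
      {z | x' ≤ z ∧ ∀ i, ∃ j, z j ≤ (a i j : ℝ)} with hS'
    have hS'sub : S' ⊆ genStaircase a := fun z hz =>
      ⟨fun j => lt_of_lt_of_le (hx'S.1 j) (hz.1 j), hz.2⟩
    have hclosed : IsClosed S' := by
      have h1 : IsClosed {z : Fin (m+1) → ℝ | x' ≤ z} := isClosed_Ici
      have h2 : IsClosed {z : Fin (m+1) → ℝ | ∀ i, ∃ j, z j ≤ (a i j : ℝ)} := by
        have : {z : Fin (m+1) → ℝ | ∀ i, ∃ j, z j ≤ (a i j : ℝ)} =
            ⋂ i, ⋃ j, {z : Fin (m+1) → ℝ | z j ≤ (a i j : ℝ)} := by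
          ext z; simp [Set.mem_iInter, Set.mem_iUnion]
        rw [this]
        exact isClosed_iInter fun i => isClosed_iUnion_of_finite fun j =>
          isClosed_le (continuous_apply j) continuous_const
      have : S' = {z : Fin (m+1) → ℝ | x' ≤ z} ∩
          {z : Fin (m+1) → ℝ | ∀ i, ∃ j, z j ≤ (a i j : ℝ)} := rfl
      rw [this]
      exact h1.inter h2
    have hsubIcc : S' ⊆ Set.Icc x' b := fun z hz =>
      ⟨hz.1, fun ℓ => hbound z (hS'sub hz) ℓ⟩
    have hcompact : IsCompact S' :=
      IsCompact.of_isClosed_subset isCompact_Icc hclosed hsubIcc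
    have hne' : S'.Nonempty := ⟨x', le_refl _, hx'S.2⟩
    obtain ⟨z, hzmem, hzmax⟩ := hcompact.exists_isMaxOn hne'
      ((continuous_finset_sum Finset.univ fun j _ => continuous_apply j).continuousOn
        (f := fun z : Fin (m+1) → ℝ => ∑ j, z j))
    have hzS : z ∈ genStaircase a := hS'sub hzmem
    have houter : z ∈ outerCorners (genStaircase a) := by
      refine ⟨hzS, fun w hw hzw => ?_⟩
      have hwS' : w ∈ S' := ⟨le_trans hzmem.1 hzw, hw.2⟩
      have hsum : ∑ j, w j ≤ ∑ j, z j := hzmax hwS'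
      funext j
      by_contra hne
      have hlt : z j < w j := lt_of_le_of_ne (hzw j) (Ne.symm hne)
      have : ∑ j, z j < ∑ j, w j :=
        Finset.sum_lt_sum (fun i _ => hzw i) ⟨j, Finset.mem_univ j, hlt⟩
      exact absurd hsum (not_le.2 this)
    have hlex : lexGT (Equiv.refl (Fin (m+1))) z (fun j => (lcmOf a I j : ℝ)) := by
      refine ⟨0, fun ℓ hℓ => absurd hℓ (Fin.not_lt_zero ℓ), ?_⟩
      have hz0 : (T : ℝ) ≤ z 0 := by
        have := hzmem.1 0
        rwa [hx', Function.update_self] at this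
      simp only [Equiv.refl_apply]
      exact lt_of_lt_of_le (Nat.cast_lt.mpr hTgt) hz0
    exact hpiece z houter hlex (le_trans hxx' hzmem.1)
  -- build the witness y
  set y : Fin (m+1) → ℝ := Function.update x 0 ((a c 0 : ℕ) : ℝ) with hy
  have hyS : y ∈ genStaircase a := by
    constructor
    · intro j
      rcases eq_or_ne j 0 with rfl | hj
      · rw [hy, Function.update_self]
        have : 0 < a c 0 := hvert ▸ hαpos 0
        exact_mod_cast this
      · rw [hy, Function.update_of_ne hj]; exact hxS.1 j
    · intro i
      by_cases h : ∀ j, j ≠ 0 → (a i j : ℝ) < x j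
      · rcases eq_or_ne i c with rfl | hic
        · exact ⟨0, by rw [hy, Function.update_self]⟩
        · refine ⟨0, ?_⟩
          rw [hy, Function.update_self]
          have : a c 0 ≤ a i 0 := le_of_lt (hvert ▸ key i hic h)
          exact_mod_cast this
      · push_neg at h
        obtain ⟨j, hj, hji⟩ := h
        exact ⟨j, by rw [hy, Function.update_of_ne hj]; exact hji⟩
  have hyR : y ∈ Rcorner a c := by
    refine ⟨hyS, by rw [hy, Function.update_self], fun ℓ hℓ => ?_⟩
    rw [hy, Function.update_of_ne hℓ]
    exact goal1 ℓ hℓ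
  refine ⟨hxS, y, hyR, ?_⟩
  funext ℓ
  simp only [Function.comp_apply]
  rw [hy, Function.update_of_ne (Fin.succ_ne_zero ℓ)]
end

section
/- Let M be a generic Artinian monomial ideal in C[z_1,...,z_n] with staircase S, let σ be a permutation of {1,...,n}, and let α be an outer corner of S whose Scarf simplex is I = {i_1,...,i_n} with x_ℓ-vertex i_{η(ℓ)}. Set τ = η ∘ σ. Then S_{σ,α} is the half-open cuboid with σ(k)-th side ]( a^{i_{τ(1)}} ∨ ··· ∨ a^{i_{τ(k-1)}} )_{σ(k)}, ( a^{i_{τ(1)}} ∨ ··· ∨ a^{i_{τ(k)}} )_{σ(k)}] for k = 1,...,n (with empty join interpreted as 0). In particular Vol(S_{σ,α}) = ∏_{k=1}^n ( a^{i_{τ(1)}} ∨ ··· ∨ a^{i_{τ(k)}} − a^{i_{τ(1)}} ∨ ··· ∨ a^{i_{τ(k-1)}} )_{σ(k)}. -/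
/-
The `x_ℓ`-vertex `g ℓ = v (η ℓ)` of the Scarf simplex is the only generator below `α = lcm(I)` that
reaches `α_ℓ` (genericity), and no generator lies strictly below `α` (Scarf property). If a point
`x` of `S_{σ,α}` had `x_{σ(k)}` at most the `σ(k)`-th coordinate of `g (σ j)` for some `j < k`,
raise its coordinates `σ(ℓ)`, `ℓ < j`, to those of `α` and push coordinate `σ(j)` up until a
generator blocks it: the blocker lies strictly below `α`, or it is `g (σ j)`, which stays below `x`
in coordinate `σ(k)`, or the pushed point sits under a lex-larger outer corner; all three are
impossible. Conversely, if an outer corner `β` first exceeding `α` at position `k₀` dominated a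
point of the cuboid, `β` would fail to dominate `g (σ k₀)` strictly at some coordinate `σ(k₁)`, and
each of `k₁ < k₀`, `k₁ = k₀`, `k₁ > k₀` gives a contradiction.
-/

open MvPolynomial MeasureTheory

open Function

section

variable {n r : ℕ} {a : Fin r → Fin n → ℕ}

lemma le_lcmOf {I : Finset (Fin r)} {i : Fin r} (hi : i ∈ I) : a i ≤ lcmOf a I :=
  fun j => Finset.le_sup (f := fun i => a i j) hi

lemma lcmOf_insert (I : Finset (Fin r)) (i : Fin r) :
    lcmOf a (insert i I) = a i ⊔ lcmOf a I :=
  funext fun _ => Finset.sup_insert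

namespace Scarf

variable {I : Finset (Fin r)}

lemma mem_of_le_lcmOf (hI : I ∈ Scarf a) {i : Fin r} (h : a i ≤ lcmOf a I) : i ∈ I := by
  rw [← hI _ (by rw [lcmOf_insert, sup_eq_right.mpr h])]
  exact Finset.mem_insert_self i I

lemma not_le_lcmOf_erase (hI : I ∈ Scarf a) {i : Fin r} (hi : i ∈ I) :
    ¬ a i ≤ lcmOf a (I.erase i) := by
  intro h
  have hlcm : lcmOf a (I.erase i) = lcmOf a I := by
    conv_rhs => rw [← Finset.insert_erase hi]
    rw [lcmOf_insert, sup_eq_right.mpr h]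
  rw [← hI _ hlcm] at hi
  exact Finset.notMem_erase i I hi

lemma exists_lcmOf_le (hI : I ∈ Scarf a) (i : Fin r) : ∃ j, lcmOf a I j ≤ a i j := by
  by_contra! h
  have hi := mem_of_le_lcmOf hI fun j => (h j).le
  refine not_le_lcmOf_erase hI hi fun j => ?_
  by_contra! hj
  have hsplit := congrFun (lcmOf_insert (a := a) (I.erase i) i) j
  rw [Finset.insert_erase hi, Pi.sup_apply, sup_eq_left.mpr hj.le] at hsplit
  exact (h j).ne hsplit.symm

lemma lcmOf_pos (hI : I ∈ Scarf a) {g : Fin n → Fin r} (hg : Injective g) (hgI : ∀ ℓ, g ℓ ∈ I)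
    (hgc : ∀ ℓ, a (g ℓ) ℓ = lcmOf a I ℓ) (j : Fin n) : 0 < lcmOf a I j := by
  by_contra! h0
  refine not_le_lcmOf_erase hI (hgI j) fun ℓ => ?_
  rcases eq_or_ne ℓ j with rfl | hℓ
  · exact ((le_lcmOf (hgI ℓ) ℓ).trans h0).trans (Nat.zero_le _)
  · calc a (g j) ℓ ≤ lcmOf a I ℓ := le_lcmOf (hgI j) ℓ
      _ = a (g ℓ) ℓ := (hgc ℓ).symm
      _ ≤ lcmOf a (I.erase (g j)) ℓ := le_lcmOf (Finset.mem_erase.mpr ⟨hg.ne hℓ, hgI ℓ⟩) ℓ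

lemma natCast_lcmOf_mem_genStaircase (hI : I ∈ Scarf a) {g : Fin n → Fin r} (hg : Injective g)
    (hgI : ∀ ℓ, g ℓ ∈ I) (hgc : ∀ ℓ, a (g ℓ) ℓ = lcmOf a I ℓ) :
    (fun j => (lcmOf a I j : ℝ)) ∈ genStaircase a :=
  ⟨fun j => Nat.cast_pos.mpr (lcmOf_pos hI hg hgI hgc j),
    fun i => (exists_lcmOf_le hI i).imp fun _ h => Nat.cast_le.mpr h⟩

end Scarf

lemma Generic.eq_of_apply_eq {c : Fin n → ℕ} (hgen : Generic a)
    (hc : (fun j => (c j : ℝ)) ∈ genStaircase a) {i i' : Fin r} (hi : a i ≤ c) (hi' : a i' ≤ c)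
    {ℓ : Fin n} (h : a i ℓ = c ℓ) (h' : a i' ℓ = c ℓ) : i = i' := by
  by_contra hne
  have hpos : ∀ j, 0 < c j := fun j => Nat.cast_pos.mp (hc.1 j)
  obtain ⟨k, hk⟩ := hgen i i' hne ⟨ℓ, h ▸ hpos ℓ, h.trans h'.symm⟩
  obtain ⟨m, hm⟩ := hc.2 k
  have hkm : c m ≤ a k m := Nat.cast_le.mp hm
  have hsup : (a i ⊔ a i') m ≤ c m := sup_le (hi m) (hi' m)
  have := (hk m).2 ((hpos m).trans_le (hkm.trans (hk m).1))
  omega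

namespace genStaircase

lemma mem_of_le {x y : Fin n → ℝ} (hy : y ∈ genStaircase a) (hx : ∀ j, 0 < x j) (hxy : x ≤ y) :
    x ∈ genStaircase a :=
  ⟨hx, fun i => (hy.2 i).imp fun j hj => (hxy j).trans hj⟩

lemma bddAbove (hart : ArtinianGens a) : BddAbove (genStaircase a) := by
  choose p hp using hart
  refine ⟨fun ℓ => a (p ℓ) ℓ, fun x hx ℓ => ?_⟩
  obtain ⟨j, hj⟩ := hx.2 (p ℓ)
  rcases eq_or_ne j ℓ with rfl | hjℓ
  · exact hj
  · rw [hp ℓ j hjℓ, Nat.cast_zero] at hj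
    exact absurd (hx.1 j) hj.not_gt

lemma exists_outerCorner_ge (hart : ArtinianGens a) {y : Fin n → ℝ} (hy : y ∈ genStaircase a) :
    ∃ β ∈ outerCorners (genStaircase a), y ≤ β := by
  obtain ⟨d, hd⟩ := bddAbove hart
  set K : Set (Fin n → ℝ) := {z | y ≤ z} ∩ ⋂ i, ⋃ j, {z | z j ≤ (a i j : ℝ)} with hKdef
  have hmemK : ∀ z, z ∈ K ↔ y ≤ z ∧ z ∈ genStaircase a := fun z => by
    simp only [hKdef, genStaircase, Set.mem_inter_iff, Set.mem_ofPred_eq, Set.mem_iInter,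
      Set.mem_iUnion]
    exact ⟨fun h => ⟨h.1, fun j => (hy.1 j).trans_le (h.1 j), h.2⟩, fun h => ⟨h.1, h.2.2⟩⟩
  have hKc : IsCompact K := by
    refine (isCompact_Icc (a := y) (b := d)).of_isClosed_subset
      ((isClosed_le continuous_const continuous_id).inter
        (isClosed_iInter fun i => isClosed_iUnion_of_finite fun j =>
          isClosed_le (continuous_apply j) continuous_const)) fun z hz => ?_
    exact ⟨((hmemK z).1 hz).1, hd ((hmemK z).1 hz).2⟩
  obtain ⟨β, hβK, hβmax⟩ := hKc.exists_isMaxOn ⟨y, (hmemK y).2 ⟨le_rfl, hy⟩⟩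
    (continuous_finsetSum Finset.univ fun j _ => continuous_apply j).continuousOn
  obtain ⟨hyβ, hβS⟩ := (hmemK β).1 hβK
  refine ⟨β, ⟨hβS, fun χ hχ hβχ => funext fun j => ?_⟩, hyβ⟩
  have hsum : ∑ j, χ j ≤ ∑ j, β j := hβmax ((hmemK χ).2 ⟨hyβ.trans hβχ, hχ⟩)
  exact ((Finset.sum_eq_sum_iff_of_le fun j _ => hβχ j).1
    (hsum.antisymm' (Finset.sum_le_sum fun j _ => hβχ j)) j (Finset.mem_univ j)).symm

lemma exists_update_mem (hart : ArtinianGens a) {w : Fin n → ℝ} (hw : w ∈ genStaircase a)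
    (m : Fin n) : ∃ i, (∀ ℓ ≠ m, (a i ℓ : ℝ) < w ℓ) ∧ w m ≤ a i m ∧
      update w m (a i m : ℝ) ∈ genStaircase a := by
  classical
  set B := Finset.univ.filter fun i => ∀ ℓ ≠ m, (a i ℓ : ℝ) < w ℓ with hBdef
  have hB : B.Nonempty := by
    obtain ⟨i, hi⟩ := hart m
    refine ⟨i, Finset.mem_filter.mpr ⟨Finset.mem_univ i, fun ℓ hℓ => ?_⟩⟩
    rw [hi ℓ hℓ, Nat.cast_zero]
    exact hw.1 ℓ
  obtain ⟨i, hiB, hmin⟩ := B.exists_min_image (fun i => a i m) hB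
  have hiw := (Finset.mem_filter.mp hiB).2
  have hwi : w m ≤ a i m := by
    obtain ⟨j, hj⟩ := hw.2 i
    rcases eq_or_ne j m with rfl | hjm
    · exact hj
    · exact absurd hj (hiw j hjm).not_ge
  refine ⟨i, hiw, hwi, fun j => ?_, fun i' => ?_⟩
  · rcases eq_or_ne j m with rfl | hjm
    · rw [update_self]; exact (hw.1 j).trans_le hwi
    · rw [update_of_ne hjm]; exact hw.1 j
  · by_cases hi' : i' ∈ B
    · exact ⟨m, by rw [update_self]; exact_mod_cast hmin i' hi'⟩
    · simp only [hBdef, Finset.mem_filter, Finset.mem_univ, true_and, not_forall, not_lt] at hi'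
      obtain ⟨ℓ, hℓ, hle⟩ := hi'
      exact ⟨ℓ, by rwa [update_of_ne hℓ]⟩

end genStaircase

lemma lexGT_of_le_of_lt {σ : Equiv.Perm (Fin n)} {α β : Fin n → ℝ} {k : Fin n}
    (hle : ∀ ℓ < k, β (σ ℓ) ≤ α (σ ℓ)) (hlt : β (σ k) < α (σ k)) : lexGT σ α β := by
  induction k using WellFoundedLT.induction with
  | _ k ih =>
    by_cases h : ∀ ℓ < k, α (σ ℓ) = β (σ ℓ)
    · exact ⟨k, h, hlt⟩
    · obtain ⟨ℓ, hℓk, hne⟩ := not_forall₂.mp h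
      exact ih ℓ hℓk (fun m hm => hle m (hm.trans hℓk)) ((hle ℓ hℓk).lt_of_ne (Ne.symm hne))

lemma volume_setOf_perm_Ioc {ι : Type*} [Fintype ι] (σ : Equiv.Perm ι) (L U : ι → ℝ) :
    volume {x : ι → ℝ | ∀ k, L k < x (σ k) ∧ x (σ k) ≤ U k} =
      ∏ k, ENNReal.ofReal (U k - L k) := by
  have hpi : {x : ι → ℝ | ∀ k, L k < x (σ k) ∧ x (σ k) ≤ U k} =
      Set.univ.pi fun m => Set.Ioc (L (σ.symm m)) (U (σ.symm m)) := by
    ext x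
    simp only [Set.mem_ofPred_eq, Set.mem_univ_pi, Set.mem_Ioc]
    exact σ.forall_congr fun {k} => by rw [σ.symm_apply_apply]
  rw [hpi, volume_pi_pi]
  simp only [Real.volume_Ioc]
  exact σ.symm.prod_comp fun k => ENNReal.ofReal (U k - L k)

section Cuboid

variable (σ : Equiv.Perm (Fin n)) {c : Fin n → ℕ} {g : Fin n → Fin r}

lemma apply_le_sup_Iio_apply {j k : Fin n} (hjk : j < k) :
    a (g (σ j)) (σ k) ≤ ((Finset.Iio k).sup fun j => a (g (σ j))) (σ k) :=
  Finset.le_sup (f := fun j => a (g (σ j))) (Finset.mem_Iio.mpr hjk) (σ k)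

lemma sup_Iic_apply_eq (hgc : ∀ ℓ, a (g ℓ) ≤ c) (hgℓ : ∀ ℓ, a (g ℓ) ℓ = c ℓ) (k : Fin n) :
    ((Finset.Iic k).sup fun j => a (g (σ j))) (σ k) = c (σ k) := by
  rw [Finset.sup_apply]
  refine le_antisymm (Finset.sup_le fun j _ => hgc (σ j) (σ k)) ?_
  rw [← hgℓ (σ k)]
  exact Finset.le_sup (f := fun j => a (g (σ j)) (σ k)) (Finset.mem_Iic.mpr le_rfl)

lemma vertex_apply_lt_of_mem_piece (hart : ArtinianGens a)
    (hc : (fun j => (c j : ℝ)) ∈ genStaircase a) (huniq : ∀ i ℓ, a i ≤ c → a i ℓ = c ℓ → i = g ℓ)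
    {x w : Fin n → ℝ} (hx : x ∈ piece (genStaircase a) σ (fun j => (c j : ℝ))) (hxw : x ≤ w)
    (hwS : w ∈ genStaircase a) (hwc : w ≤ fun j => (c j : ℝ)) {j : Fin n}
    (hwj : ∀ ℓ < j, w (σ ℓ) = c (σ ℓ)) : ∀ m ≠ σ j, (a (g (σ j)) m : ℝ) < w m := by
  obtain ⟨i, hiw, hwi, hw'S⟩ := genStaircase.exists_update_mem hart hwS (σ j)
  have hic : ∀ m ≠ σ j, (a i m : ℝ) < c m := fun m hm => (hiw m hm).trans_le (hwc m)
  rcases lt_trichotomy (a i (σ j)) (c (σ j)) with hlt | heq | hgt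
  · obtain ⟨m, hm⟩ := hc.2 i
    rcases eq_or_ne m (σ j) with rfl | hm'
    · exact absurd (Nat.cast_le.mp hm) hlt.not_ge
    · exact absurd hm (hic m hm').not_ge
  · have hi : i = g (σ j) := huniq i (σ j) (fun m => by
      rcases eq_or_ne m (σ j) with rfl | hm
      exacts [heq.le, by exact_mod_cast (hic m hm).le]) heq
    exact hi ▸ hiw
  · obtain ⟨γ, hγ, hwγ⟩ := genStaircase.exists_outerCorner_ge hart hw'S
    have hxw' : x ≤ update w (σ j) (a i (σ j) : ℝ) :=
      le_update_iff.mpr ⟨(hxw _).trans hwi, fun m _ => hxw m⟩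
    refine absurd (hxw'.trans hwγ) (hx.2.2 γ hγ (lexGT_of_le_of_lt (k := j) (fun ℓ hℓ => ?_) ?_))
    · have := hwγ (σ ℓ)
      rwa [update_of_ne (σ.injective.ne hℓ.ne), hwj ℓ hℓ] at this
    · have := hwγ (σ j)
      rw [update_self] at this
      exact (Nat.cast_lt.mpr hgt).trans_le this

lemma piece_subset_cuboid (hart : ArtinianGens a) (hc : (fun j => (c j : ℝ)) ∈ genStaircase a)
    (huniq : ∀ i ℓ, a i ≤ c → a i ℓ = c ℓ → i = g ℓ) :
    piece (genStaircase a) σ (fun j => (c j : ℝ)) ⊆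
      {x : Fin n → ℝ | ∀ k, (((Finset.Iio k).sup fun j => a (g (σ j))) (σ k) : ℝ) < x (σ k) ∧
        x (σ k) ≤ (c (σ k) : ℝ)} := by
  intro x hx k
  have hxS : x ∈ genStaircase a := hx.1
  have hxc : x ≤ fun j => (c j : ℝ) := hx.2.1
  refine ⟨?_, hxc (σ k)⟩
  by_contra! hxk
  rw [Finset.sup_apply] at hxk
  rcases (Finset.Iio k).eq_empty_or_nonempty with hk | hk
  · rw [hk, Finset.sup_empty, bot_eq_zero, Nat.cast_zero] at hxk
    exact (hxS.1 (σ k)).not_ge hxk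
  obtain ⟨j, hjk, hj⟩ := Finset.exists_mem_eq_sup _ hk fun j => a (g (σ j)) (σ k)
  rw [hj] at hxk
  have hjk : j < k := Finset.mem_Iio.mp hjk
  obtain ⟨w, hwσ⟩ : ∃ w : Fin n → ℝ, ∀ ℓ, w (σ ℓ) = if ℓ < j then (c (σ ℓ) : ℝ) else x (σ ℓ) :=
    ⟨fun m => if σ.symm m < j then c m else x m, fun ℓ => by simp only [Equiv.symm_apply_apply]⟩
  have hxw : x ≤ w := fun m => by
    obtain ⟨ℓ, rfl⟩ := σ.surjective m
    rw [hwσ]; split_ifs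
    exacts [hxc _, le_rfl]
  have hwc : w ≤ fun j => (c j : ℝ) := fun m => by
    obtain ⟨ℓ, rfl⟩ := σ.surjective m
    rw [hwσ]; split_ifs
    exacts [le_rfl, hxc _]
  have hwS := genStaircase.mem_of_le hc (fun m => (hxS.1 m).trans_le (hxw m)) hwc
  have hlt := vertex_apply_lt_of_mem_piece σ hart hc huniq hx hxw hwS hwc
    (fun ℓ hℓ => by rw [hwσ, if_pos hℓ]) (σ k) (σ.injective.ne hjk.ne')
  rw [hwσ, if_neg hjk.not_gt] at hlt
  exact hlt.not_ge hxk

lemma cuboid_subset_piece (hc : (fun j => (c j : ℝ)) ∈ genStaircase a) (hgc : ∀ ℓ, a (g ℓ) ≤ c)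
    (hgℓ : ∀ ℓ, a (g ℓ) ℓ = c ℓ) (huniq : ∀ i ℓ, a i ≤ c → a i ℓ = c ℓ → i = g ℓ) :
    {x : Fin n → ℝ | ∀ k, (((Finset.Iio k).sup fun j => a (g (σ j))) (σ k) : ℝ) < x (σ k) ∧
        x (σ k) ≤ (c (σ k) : ℝ)} ⊆ piece (genStaircase a) σ (fun j => (c j : ℝ)) := by
  intro x hx
  have hxc : x ≤ fun j => (c j : ℝ) := fun m => by simpa using (hx (σ.symm m)).2
  have hxpos : ∀ m, 0 < x m := fun m => by
    simpa using (Nat.cast_nonneg _).trans_lt (hx (σ.symm m)).1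
  refine ⟨genStaircase.mem_of_le hc hxpos hxc, hxc, ?_⟩
  rintro β hβ ⟨k₀, hβeq, hβgt⟩ hxβ
  obtain ⟨m, hm⟩ := hβ.1.2 (g (σ k₀))
  obtain ⟨k₁, rfl⟩ := σ.surjective m
  rcases lt_trichotomy k₁ k₀ with hlt | rfl | hgt
  · have hcoord : a (g (σ k₀)) (σ k₁) = c (σ k₁) :=
      (hgc _ _).antisymm (Nat.cast_le.mp ((hβeq k₁ hlt).symm.trans_le hm))
    have hsup := apply_le_sup_Iio_apply σ (a := a) (g := g) hlt
    rw [← huniq _ _ (hgc _) hcoord, hgℓ] at hsup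
    have := (hx k₀).1.trans_le (hxc (σ k₀))
    exact this.not_ge (Nat.cast_le.mpr hsup)
  · rw [hgℓ] at hm
    exact hβgt.not_ge hm
  · have hsup := apply_le_sup_Iio_apply σ (a := a) (g := g) hgt
    have := ((hxβ (σ k₁)).trans hm).trans (Nat.cast_le.mpr hsup)
    exact (hx k₁).1.not_ge this

lemma piece_genStaircase_eq_cuboid (hart : ArtinianGens a)
    (hc : (fun j => (c j : ℝ)) ∈ genStaircase a) (hgc : ∀ ℓ, a (g ℓ) ≤ c)
    (hgℓ : ∀ ℓ, a (g ℓ) ℓ = c ℓ) (huniq : ∀ i ℓ, a i ≤ c → a i ℓ = c ℓ → i = g ℓ) :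
    piece (genStaircase a) σ (fun j => (c j : ℝ)) =
      {x : Fin n → ℝ | ∀ k, (((Finset.Iio k).sup fun j => a (g (σ j))) (σ k) : ℝ) < x (σ k) ∧
        x (σ k) ≤ (c (σ k) : ℝ)} :=
  (piece_subset_cuboid σ hart hc huniq).antisymm (cuboid_subset_piece σ hc hgc hgℓ huniq)

end Cuboid

end

theorem stmt13_general {n r : ℕ} (a : Fin r → Fin n → ℕ)
    (hgen : Generic a) (hart : ArtinianGens a)
    (σ : Equiv.Perm (Fin n))
    (I : Finset (Fin r)) (hI : I ∈ Scarf a)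
    (v : Fin n → Fin r) (hv1 : Function.Injective v) (hv2 : ∀ ℓ, v ℓ ∈ I)
    (η : Equiv.Perm (Fin n)) (hη : ∀ ℓ, a (v (η ℓ)) ℓ = lcmOf a I ℓ) :
    piece (genStaircase a) σ (fun j => (lcmOf a I j : ℝ)) =
        {x : Fin n → ℝ | ∀ k : Fin n,
          ((((Finset.Iio k).sup fun j => a (v (η (σ j)))) (σ k) : ℝ) < x (σ k) ∧
            x (σ k) ≤ (((Finset.Iic k).sup fun j => a (v (η (σ j)))) (σ k) : ℝ))} ∧
      volume (piece (genStaircase a) σ (fun j => (lcmOf a I j : ℝ))) =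
        (↑(∏ k : Fin n,
          (((Finset.Iic k).sup fun j => a (v (η (σ j)))) (σ k) -
            ((Finset.Iio k).sup fun j => a (v (η (σ j)))) (σ k))) : ENNReal) := by
  have hg : Injective fun ℓ => v (η ℓ) := hv1.comp η.injective
  have hc := Scarf.natCast_lcmOf_mem_genStaircase hI hg (fun ℓ => hv2 (η ℓ)) hη
  have hgc : ∀ ℓ, a (v (η ℓ)) ≤ lcmOf a I := fun ℓ => le_lcmOf (hv2 (η ℓ))
  have hcuboid : piece (genStaircase a) σ (fun j => (lcmOf a I j : ℝ)) =
      {x : Fin n → ℝ | ∀ k, (((Finset.Iio k).sup fun j => a (v (η (σ j)))) (σ k) : ℝ) < x (σ k) ∧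
        x (σ k) ≤ (lcmOf a I (σ k) : ℝ)} :=
    piece_genStaircase_eq_cuboid σ hart hc hgc hη
      fun i ℓ hi h => hgen.eq_of_apply_eq hc hi (hgc ℓ) h (hη ℓ)
  have hupper : ∀ k, ((Finset.Iic k).sup fun j => a (v (η (σ j)))) (σ k) = lcmOf a I (σ k) :=
    sup_Iic_apply_eq σ hgc hη
  have hlower : ∀ k, ((Finset.Iio k).sup fun j => a (v (η (σ j)))) (σ k) ≤ lcmOf a I (σ k) :=
    fun k => hupper k ▸
      Finset.sup_mono (f := fun j => a (v (η (σ j)))) Finset.Iio_subset_Iic_self (σ k)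
  simp only [hupper]
  refine ⟨hcuboid, ?_⟩
  rw [hcuboid, volume_setOf_perm_Ioc, Nat.cast_prod]
  refine Finset.prod_congr rfl fun k _ => ?_
  rw [← Nat.cast_sub (hlower k), ENNReal.ofReal_natCast]

/-- for a generic Artinian monomial ideal, a permutation `σ` and an
outer corner `α = lcm(I)` of a top Scarf simplex `I` with vertex enumeration `v`
and `x_ℓ`-vertex permutation `η`, the piece `S_{σ,α}` is the half-open cuboid
whose `σ(k)`-th side is
`]( a^{i_{τ(1)}} ∨ ⋯ ∨ a^{i_{τ(k-1)}} )_{σ(k)}, ( a^{i_{τ(1)}} ∨ ⋯ ∨ a^{i_{τ(k)}} )_{σ(k)}]`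
with `τ = η ∘ σ`; in particular its volume is the product of the side lengths. -/
theorem stmt13 {n r : ℕ} (a : Fin r → Fin n → ℕ)
    (hgen : Generic a) (hart : ArtinianGens a) (hminimal : MinimalGens a)
    (σ : Equiv.Perm (Fin n))
    (I : Finset (Fin r)) (hI : I ∈ Scarf a) (hcard : I.card = n)
    (v : Fin n → Fin r) (hv1 : Function.Injective v) (hv2 : ∀ ℓ, v ℓ ∈ I)
    (η : Equiv.Perm (Fin n)) (hη : ∀ ℓ, a (v (η ℓ)) ℓ = lcmOf a I ℓ) :
    piece (genStaircase a) σ (fun j => (lcmOf a I j : ℝ)) =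
        {x : Fin n → ℝ | ∀ k : Fin n,
          ((((Finset.Iio k).sup fun j => a (v (η (σ j)))) (σ k) : ℝ) < x (σ k) ∧
            x (σ k) ≤ (((Finset.Iic k).sup fun j => a (v (η (σ j)))) (σ k) : ℝ))} ∧
      volume (piece (genStaircase a) σ (fun j => (lcmOf a I j : ℝ))) =
        (↑(∏ k : Fin n,
          (((Finset.Iic k).sup fun j => a (v (η (σ j)))) (σ k) -
            ((Finset.Iio k).sup fun j => a (v (η (σ j)))) (σ k))) : ENNReal) :=
  stmt13_general a hgen hart σ I hI v hv1 hv2 η hη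
end
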